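/- arXiv:2503.02168 — 2 statements merged into one kernel-verified Lean document; each statement's English description precedes it below -/
import Mathlib

section
/- Let α be a real quadratic irrational and β an irrational real number. Suppose there exists m ∈ ℕ such that for every natural number n with n ≥ m and n ≥ 1 there exist integers i, j, k, l with |i·l − j·k| = 1 and (i·(n·α) + j)/(k·(n·α) + l) = n·β. Then there exists a rational number q with α = β + q or α = −β + q. -/
/-!
A monic integer quadratic `y² + B y + C` vanishing at an irrational `y` divides every integer
quadratic relation of `y`, and a `PGL₂(ℤ)` substitution carries the relations of `x` to
relations of `y` with the same discriminant. Hence `B² - 4C = (2y + B)²` is a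
`PGL₂(ℤ)`-invariant of `y`. The number `β` is quadratic over `ℚ`, being a Möbius image of `n α`
divided by `n`. Choosing `n` divisible by all denominators, `n α` and `n β` satisfy monic
integer quadratics, so `(2 n α + B)² = (2 n β + B')²`, that is `α = ± β + (± B' - B) / 2n`.
-/

/-- Two irrational reals are `PGL₂(ℤ)`-equivalent when related by an integral
fractional linear transformation of determinant `±1`. -/
def PGL2ZEquiv (x y : ℝ) : Prop :=
  ∃ i j k l : ℤ, |i * l - j * k| = 1 ∧
    ((i : ℝ) * x + (j : ℝ)) / ((k : ℝ) * x + (l : ℝ)) = y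

theorem Irrational.eq_zero_of_ratCast_mul_add_eq_zero {x : ℝ} (hx : Irrational x) {p q : ℚ}
    (h : (p : ℝ) * x + q = 0) : p = 0 ∧ q = 0 := by
  by_cases hp : p = 0
  · subst hp
    exact ⟨rfl, by simpa using h⟩
  · exact absurd h ((hx.ratCast_mul hp).add_ratCast q).ne_zero

theorem Irrational.eq_zero_of_intCast_mul_add_eq_zero {x : ℝ} (hx : Irrational x) {p q : ℤ}
    (h : (p : ℝ) * x + q = 0) : p = 0 ∧ q = 0 := by
  exact_mod_cast hx.eq_zero_of_ratCast_mul_add_eq_zero (p := p) (q := q) (by exact_mod_cast h)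

def HasMonicRatQuadratic (x : ℝ) : Prop :=
  ∃ p q : ℚ, x ^ 2 + p * x + q = 0

theorem Irrational.hasMonicRatQuadratic {x : ℝ} (hx : Irrational x) {a b c : ℚ}
    (habc : ¬(a = 0 ∧ b = 0 ∧ c = 0)) (h : (a : ℝ) * x ^ 2 + b * x + c = 0) :
    HasMonicRatQuadratic x := by
  have ha : a ≠ 0 := by
    rintro rfl
    exact habc ⟨rfl, hx.eq_zero_of_ratCast_mul_add_eq_zero (by simpa using h)⟩
  have ha' : (a : ℝ) ≠ 0 := by exact_mod_cast ha
  refine ⟨b / a, c / a, ?_⟩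
  push_cast
  field_simp
  linear_combination h

theorem HasMonicRatQuadratic.ratCast_mul {x : ℝ} (hx : HasMonicRatQuadratic x) (r : ℚ) :
    HasMonicRatQuadratic (r * x) := by
  obtain ⟨p, q, h⟩ := hx
  exact ⟨r * p, r ^ 2 * q, by push_cast; linear_combination (r : ℝ) ^ 2 * h⟩

theorem HasMonicRatQuadratic.exists_intCoeffs_natCast_mul {x : ℝ} (hx : HasMonicRatQuadratic x) :
    ∃ N : ℕ, 0 < N ∧
      ∀ n : ℕ, N ∣ n → ∃ b c : ℤ, ((n : ℝ) * x) ^ 2 + b * (n * x) + c = 0 := by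
  obtain ⟨p, q, h⟩ := hx
  refine ⟨p.den * q.den, by positivity, ?_⟩
  rintro _ ⟨e, rfl⟩
  -- `n p = e q.den p.num` and `n² q = n e p.den q.num` for `n = p.den q.den e`
  refine ⟨e * q.den * p.num, p.den * q.den * e * e * p.den * q.num, ?_⟩
  rw [Rat.cast_def p, Rat.cast_def q] at h
  have hp : (p.den : ℝ) ≠ 0 := by positivity
  have hq : (q.den : ℝ) ≠ 0 := by positivity
  field_simp at h
  push_cast
  linear_combination (e : ℝ) ^ 2 * p.den * q.den * h

theorem intCast_discrim_eq_sq_of_monic_quadratic {x : ℝ} {b c : ℤ}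
    (h : x ^ 2 + b * x + c = 0) : ((discrim 1 b c : ℤ) : ℝ) = (2 * x + b) ^ 2 := by
  rw [show ((discrim 1 b c : ℤ) : ℝ) = discrim 1 (b : ℝ) c by simp [discrim],
    discrim_eq_sq_of_quadratic_eq_zero (a := (1 : ℝ)) (x := x) (by linear_combination h)]
  ring

theorem Irrational.discrim_ne_zero {x : ℝ} (hx : Irrational x) {b c : ℤ}
    (h : x ^ 2 + b * x + c = 0) : discrim 1 b c ≠ 0 := by
  intro hD
  have hsq := intCast_discrim_eq_sq_of_monic_quadratic h
  rw [hD, Int.cast_zero, eq_comm, pow_eq_zero_iff two_ne_zero] at hsq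
  exact two_ne_zero (hx.eq_zero_of_intCast_mul_add_eq_zero (p := 2) (by exact_mod_cast hsq)).1

theorem Irrational.eq_mul_of_monic_quadratic {x : ℝ} (hx : Irrational x) {b c A B C : ℤ}
    (h : x ^ 2 + b * x + c = 0) (h' : A * x ^ 2 + B * x + C = 0) : B = A * b ∧ C = A * c := by
  have := hx.eq_zero_of_intCast_mul_add_eq_zero (p := B - A * b) (q := C - A * c)
    (by push_cast; linear_combination h' - (A : ℝ) * h)
  omega

theorem PGL2ZEquiv.exists_mul_eq {x y : ℝ} (hx : Irrational x) (h : PGL2ZEquiv x y) :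
    ∃ i j k l : ℤ, (i * l - j * k) ^ 2 = 1 ∧ y * (k * x + l) = i * x + j := by
  obtain ⟨i, j, k, l, hdet, rfl⟩ := h
  have hkl : (k : ℝ) * x + l ≠ 0 := by
    intro h0
    obtain ⟨rfl, rfl⟩ := hx.eq_zero_of_intCast_mul_add_eq_zero h0
    simp at hdet
  exact ⟨i, j, k, l, by rw [← sq_abs, hdet, one_pow], div_mul_cancel₀ _ hkl⟩

theorem exists_quadratic_discrim_eq_of_mul_eq {x y : ℝ} {b c i j k l : ℤ}
    (hdet : (i * l - j * k) ^ 2 = 1) (hxy : y * (k * x + l) = i * x + j)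
    (hx : x ^ 2 + b * x + c = 0) :
    ∃ A B C : ℤ, A * y ^ 2 + B * y + C = 0 ∧ discrim A B C = discrim 1 b c := by
  -- substitute `x = (j - l y) / (k y - i)` and clear the denominator `(k y - i)²`
  refine ⟨l ^ 2 - b * k * l + c * k ^ 2, b * (i * l + j * k) - 2 * j * l - 2 * c * i * k,
    j ^ 2 - b * i * j + c * i ^ 2, ?_, ?_⟩
  · push_cast
    linear_combination (k * y - i) ^ 2 * hx +
      (-(j - l * y + x * (k * y - i)) - b * (k * y - i) : ℝ) * hxy
  · unfold discrim
    linear_combination (b ^ 2 - 4 * c) * hdet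

theorem Irrational.exists_discrim_eq_sq_mul {x y : ℝ} (hy : Irrational y)
    {b c b' c' i j k l : ℤ}
    (hdet : (i * l - j * k) ^ 2 = 1) (hxy : y * (k * x + l) = i * x + j)
    (hx : x ^ 2 + b * x + c = 0) (hy' : y ^ 2 + b' * y + c' = 0) :
    ∃ t : ℤ, discrim 1 b c = t ^ 2 * discrim 1 b' c' := by
  obtain ⟨A, B, C, hABC, hD⟩ := exists_quadratic_discrim_eq_of_mul_eq hdet hxy hx
  obtain ⟨rfl, rfl⟩ := hy.eq_mul_of_monic_quadratic hy' hABC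
  exact ⟨A, by rw [← hD]; unfold discrim; ring⟩

theorem PGL2ZEquiv.discrim_eq {x y : ℝ} (h : PGL2ZEquiv x y) (hx : Irrational x)
    (hy : Irrational y) {b c b' c' : ℤ} (hx' : x ^ 2 + b * x + c = 0)
    (hy' : y ^ 2 + b' * y + c' = 0) : discrim 1 b c = discrim 1 b' c' := by
  obtain ⟨i, j, k, l, hdet, hxy⟩ := h.exists_mul_eq hx
  obtain ⟨t, ht⟩ := hy.exists_discrim_eq_sq_mul hdet hxy hx' hy'
  obtain ⟨s, hs⟩ := hx.exists_discrim_eq_sq_mul (i := l) (j := -j) (k := -k) (l := i)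
    (by linear_combination hdet) (by push_cast; linear_combination -hxy) hy' hx'
  have hts : t ^ 2 * s ^ 2 = 1 := by
    refine mul_right_cancel₀ (hx.discrim_ne_zero hx') ?_
    linear_combination -ht - t ^ 2 * hs
  rw [ht, Int.eq_one_of_mul_eq_one_right (sq_nonneg t) hts, one_mul]

theorem PGL2ZEquiv.hasMonicRatQuadratic {x y : ℝ} (h : PGL2ZEquiv x y) (hx : Irrational x)
    (hy : Irrational y) {b c : ℤ} (hx' : x ^ 2 + b * x + c = 0) : HasMonicRatQuadratic y := by
  obtain ⟨i, j, k, l, hdet, hxy⟩ := h.exists_mul_eq hx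
  obtain ⟨A, B, C, hABC, hD⟩ := exists_quadratic_discrim_eq_of_mul_eq hdet hxy hx'
  refine hy.hasMonicRatQuadratic (a := A) (b := B) (c := C) ?_ (by exact_mod_cast hABC)
  rintro ⟨hA, hB, hC⟩
  simp only [Int.cast_eq_zero] at hA hB hC
  subst hA hB hC
  exact hx.discrim_ne_zero hx' (by rw [← hD]; simp [discrim])

theorem exists_rat_eq_add_or_eq_neg_add_of_discrim_eq {α β : ℝ} {n : ℕ} (hn : n ≠ 0)
    {b c b' c' : ℤ} (hα : ((n : ℝ) * α) ^ 2 + b * (n * α) + c = 0)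
    (hβ : ((n : ℝ) * β) ^ 2 + b' * (n * β) + c' = 0) (hD : discrim 1 b c = discrim 1 b' c') :
    ∃ q : ℚ, α = β + q ∨ α = -β + q := by
  have hsq : (2 * (n * α) + b) ^ 2 = (2 * (n * β) + b' : ℝ) ^ 2 := by
    rw [← intCast_discrim_eq_sq_of_monic_quadratic hα,
      ← intCast_discrim_eq_sq_of_monic_quadratic hβ, hD]
  have hn' : (n : ℝ) ≠ 0 := by exact_mod_cast hn
  rcases sq_eq_sq_iff_eq_or_eq_neg.mp hsq with h | h
  · refine ⟨(b' - b) / (2 * n), Or.inl ?_⟩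
    push_cast
    field_simp
    linear_combination h
  · refine ⟨(-b' - b) / (2 * n), Or.inr ?_⟩
    push_cast
    field_simp
    linear_combination h

/-- If a quadratic irrational `α` and an irrational `β` are eventually
`PGL₂(ℤ)`-equivalent, then `α = ±β + q` for some rational `q`. -/
theorem stmt_7 (α β : ℝ) (hα : Irrational α)
    (hquad : ∃ a b c : ℚ, ¬(a = 0 ∧ b = 0 ∧ c = 0) ∧
      (a : ℝ) * α ^ 2 + (b : ℝ) * α + (c : ℝ) = 0)
    (hβ : Irrational β)
    (hev : ∃ m : ℕ, ∀ n : ℕ, m ≤ n → 1 ≤ n →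
      PGL2ZEquiv ((n : ℝ) * α) ((n : ℝ) * β)) :
    ∃ q : ℚ, α = β + (q : ℝ) ∨ α = -β + (q : ℝ) := by
  obtain ⟨m, hev⟩ := hev
  obtain ⟨a, b, c, habc, h⟩ := hquad
  have hequiv : ∀ N : ℕ, 0 < N →
      PGL2ZEquiv (((m + 1) * N : ℕ) * α) (((m + 1) * N : ℕ) * β) := fun N hN =>
    hev _ (by nlinarith) (by nlinarith)
  obtain ⟨Nα, hNα, hαint⟩ := (hα.hasMonicRatQuadratic habc h).exists_intCoeffs_natCast_mul
  have hβq : HasMonicRatQuadratic β := by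
    have hn₀ : (m + 1) * Nα ≠ 0 := by positivity
    obtain ⟨b₀, c₀, h₀⟩ := hαint _ (dvd_mul_left _ _)
    have := ((hequiv Nα hNα).hasMonicRatQuadratic (hα.natCast_mul hn₀) (hβ.natCast_mul hn₀)
      h₀).ratCast_mul (((m + 1) * Nα : ℕ) : ℚ)⁻¹
    rwa [Rat.cast_inv, Rat.cast_natCast, inv_mul_cancel_left₀ (by exact_mod_cast hn₀)] at this
  obtain ⟨Nβ, hNβ, hβint⟩ := hβq.exists_intCoeffs_natCast_mul
  have hn : (m + 1) * (Nα * Nβ) ≠ 0 := by positivity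
  obtain ⟨B, C, hBC⟩ := hαint ((m + 1) * (Nα * Nβ)) ⟨(m + 1) * Nβ, by ring⟩
  obtain ⟨B', C', hBC'⟩ := hβint ((m + 1) * (Nα * Nβ)) ⟨(m + 1) * Nα, by ring⟩
  exact exists_rat_eq_add_or_eq_neg_add_of_discrim_eq hn hBC hBC' <|
    (hequiv _ (by positivity)).discrim_eq (hα.natCast_mul hn) (hβ.natCast_mul hn) hBC hBC'
end

section
/- Let γ be an irrational real number which is a quadratic algebraic integer, i.e. γ² + b·γ + c = 0 for some integers b and c, and let γ̄ = −b − γ be its Galois conjugate. Then for all integers i, j, k, l with i·l − j·k = 1 or i·l − j·k = −1, one has |(i·γ + j)/(k·γ + l) − (i·γ̄ + j)/(k·γ̄ + l)| ≤ |γ − γ̄|. In other words, a quadratic algebraic integer maximizes the height h(z) = |z − z̄| within its PGL₂(ℤ)-orbit. -/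
/-!
A unimodular Möbius map `M` satisfies
`M z - M w = ± (z - w) / ((k z + l) (k w + l))`.
For a root `γ` of `x² + b x + c` and its conjugate `γ̄ = -b - γ`, the denominator
`(k γ + l) (k γ̄ + l) = k² c - k l b + l²` is an integer (a norm), and it is nonzero because
`γ` and `γ̄` are irrational. Hence its absolute value is at least `1`, and `M` cannot increase
`|γ - γ̄|`.
-/

theorem Irrational.intCast_mul_add_intCast_ne_zero {x : ℝ} (hx : Irrational x) {k l : ℤ}
    (hkl : k ≠ 0 ∨ l ≠ 0) : (k : ℝ) * x + l ≠ 0 := by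
  rcases eq_or_ne k 0 with rfl | hk
  · simpa using hkl
  · exact ((hx.intCast_mul hk).add_intCast l).ne_zero

theorem mobius_sub_mobius {K : Type*} [Field K] (i j k l : K) {z w : K}
    (hz : k * z + l ≠ 0) (hw : k * w + l ≠ 0) :
    (i * z + j) / (k * z + l) - (i * w + j) / (k * w + l) =
      (i * l - j * k) * (z - w) / ((k * z + l) * (k * w + l)) := by
  rw [div_sub_div _ _ hz hw]
  ring

theorem mul_add_mul_conj_add_eq {R : Type*} [CommRing R] {γ b c : R}
    (h : γ ^ 2 + b * γ + c = 0) (k l : R) :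
    (k * γ + l) * (k * (-b - γ) + l) = k ^ 2 * c - k * l * b + l ^ 2 := by
  linear_combination (-k ^ 2) * h

theorem abs_mobius_sub_mobius_le {z w : ℝ} {i j k l D : ℤ} (hdet : IsUnit (i * l - j * k))
    (hz : (k : ℝ) * z + l ≠ 0) (hw : (k : ℝ) * w + l ≠ 0)
    (hD : ((k : ℝ) * z + l) * ((k : ℝ) * w + l) = D) :
    |((i : ℝ) * z + j) / ((k : ℝ) * z + l) - ((i : ℝ) * w + j) / ((k : ℝ) * w + l)| ≤ |z - w| := by
  have hdet_abs : |((i : ℝ) * l - j * k)| = 1 := by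
    exact_mod_cast Int.isUnit_iff_abs_eq.mp hdet
  have hD_ne : D ≠ 0 := by
    rw [← Int.cast_ne_zero (α := ℝ), ← hD]
    exact mul_ne_zero hz hw
  have hD_abs : (1 : ℝ) ≤ |(D : ℝ)| := by
    exact_mod_cast Int.one_le_abs hD_ne
  rw [mobius_sub_mobius _ _ _ _ hz hw, hD, abs_div, abs_mul, hdet_abs, one_mul]
  exact div_le_self (abs_nonneg _) hD_abs

/-- A quadratic algebraic integer maximizes the height `h(z) = |z - z̄|` within its
`PGL₂(ℤ)`-orbit. -/
theorem stmt_12 (γ : ℝ) (hγ : Irrational γ) (b c : ℤ)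
    (heq : γ ^ 2 + (b : ℝ) * γ + (c : ℝ) = 0) :
    ∀ i j k l : ℤ, (i * l - j * k = 1 ∨ i * l - j * k = -1) →
      |((i : ℝ) * γ + (j : ℝ)) / ((k : ℝ) * γ + (l : ℝ)) -
        ((i : ℝ) * (-(b : ℝ) - γ) + (j : ℝ)) / ((k : ℝ) * (-(b : ℝ) - γ) + (l : ℝ))| ≤
      |γ - (-(b : ℝ) - γ)| := by
  intro i j k l hdet
  have hkl : k ≠ 0 ∨ l ≠ 0 := by
    by_contra! h
    obtain ⟨rfl, rfl⟩ := h
    simp at hdet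
  have hconj : Irrational (-(b : ℝ) - γ) := by
    simpa using hγ.intCast_sub (-b)
  refine abs_mobius_sub_mobius_le (D := k ^ 2 * c - k * l * b + l ^ 2) (Int.isUnit_iff.mpr hdet)
    (hγ.intCast_mul_add_intCast_ne_zero hkl) (hconj.intCast_mul_add_intCast_ne_zero hkl) ?_
  push_cast
  exact mul_add_mul_conj_add_eq heq _ _
end
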